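/- arXiv:2208.03202 — 5 statements merged into one kernel-verified Lean document; each statement's English description precedes it below -/
import Mathlib

section
/- A partial injection α on {1,...,n} with domain {d₁ < d₂ < ... < d_p} and values m_k = α(d_k) is order-preserving, fence-preserving (with respect to the zig-zag order where i ≺ i+1 for odd i and i ≻ i+1 for even i), parity-preserving, and has fence-preserving inverse, if and only if the following four conditions hold: (i) m₁ < m₂ < ... < m_p; (ii) d₁ and m₁ have the same parity; (iii) for all k ∈ {1,...,p−1}, d_{k+1} − d_k = 1 if and only if m_{k+1} − m_k = 1; (iv) for all k ∈ {1,...,p−1}, d_{k+1} − d_k is even if and only if m_{k+1} − m_k is even. -/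
/-!
Write the graph of `a` as the columns `(d k, m k)`. Since `FenceLt x y` means that `x` is odd and
`x`, `y` are adjacent, a parity-preserving map is fence-preserving exactly when it sends
`x ↦ x + 1` to `y ↦ y + 1`; and as `d` and `m` increase, `d j = d i + 1` forces `j = i + 1`, so only
consecutive columns matter, which gives (iii). Parity preservation propagates from the first column
along the rows precisely when consecutive gaps of `d` and `m` have equal parity, which is (iv).
-/

/-- A partial injection on `{1,...,n}`, represented by its graph. -/
structure PInj (n : ℕ) where
  R : ℕ → ℕ → Prop
  memL : ∀ ⦃x y⦄, R x y → x ∈ Set.Icc 1 n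
  memR : ∀ ⦃x y⦄, R x y → y ∈ Set.Icc 1 n
  func : ∀ ⦃x y y'⦄, R x y → R x y' → y = y'
  inj : ∀ ⦃x x' y⦄, R x y → R x' y → x = x'

namespace PInj

variable {n : ℕ}

@[ext] theorem ext {a b : PInj n} (h : ∀ x y, a.R x y ↔ b.R x y) : a = b := by
  cases a; cases b
  simp only [mk.injEq]
  funext x y
  exact propext (h x y)

instance : Mul (PInj n) :=
  ⟨fun a b =>
    { R := fun x z => ∃ y, a.R x y ∧ b.R y z
      memL := by rintro x z ⟨y, h1, _⟩; exact a.memL h1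
      memR := by rintro x z ⟨y, _, h2⟩; exact b.memR h2
      func := by
        rintro x z z' ⟨y, h1, h2⟩ ⟨y', h1', h2'⟩
        obtain rfl := a.func h1 h1'
        exact b.func h2 h2'
      inj := by
        rintro x x' z ⟨y, h1, h2⟩ ⟨y', h1', h2'⟩
        obtain rfl := b.inj h2 h2'
        exact a.inj h1 h1' }⟩

instance : One (PInj n) :=
  ⟨{ R := fun x y => x ∈ Set.Icc 1 n ∧ y = x
     memL := by rintro x y ⟨h, rfl⟩; exact h
     memR := by rintro x y ⟨h, rfl⟩; exact h
     func := by rintro x y y' ⟨_, rfl⟩ ⟨_, rfl⟩; rfl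
     inj := by rintro x x' y ⟨_, rfl⟩ ⟨_, h⟩; exact h }⟩

instance : Monoid (PInj n) where
  mul_assoc a b c := by
    ext x y
    constructor
    · rintro ⟨z, ⟨w, h1, h2⟩, h3⟩; exact ⟨w, h1, z, h2, h3⟩
    · rintro ⟨w, h1, z, h2, h3⟩; exact ⟨z, ⟨w, h1, h2⟩, h3⟩
  one_mul a := by
    ext x y
    constructor
    · rintro ⟨z, ⟨_, rfl⟩, h⟩; exact h
    · intro h; exact ⟨x, ⟨a.memL h, rfl⟩, h⟩
  mul_one a := by
    ext x y
    constructor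
    · rintro ⟨z, h, _, rfl⟩; exact h
    · intro h; exact ⟨y, h, a.memR h, rfl⟩

/-- The inverse of a partial injection. -/
def inv (a : PInj n) : PInj n where
  R := fun x y => a.R y x
  memL := by intro x y h; exact a.memR h
  memR := by intro x y h; exact a.memL h
  func := by intro x y y' h h'; exact a.inj h h'
  inj := by intro x x' y h h'; exact a.func h h'

/-- The domain of a partial injection. -/
def dom (a : PInj n) : Set ℕ := {x | ∃ y, a.R x y}

/-- The image of a partial injection. -/
def im (a : PInj n) : Set ℕ := {y | ∃ x, a.R x y}

end PInj

/-- The strict fence (zig-zag) order on `{1,...,n}`: `x ≺ y` iff `x` is odd and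
`x`, `y` are adjacent.  It is generated by `i ≺ i+1` for odd `i` and `i+1 ≺ i`
for even `i`. -/
def FenceLt (x y : ℕ) : Prop := Odd x ∧ (y = x + 1 ∨ x = y + 1)

/-- Membership in `IOF_n^par`: order-preserving, parity-preserving,
fence-preserving, and with fence-preserving inverse. -/
def IsIOF {n : ℕ} (a : PInj n) : Prop :=
  (∀ ⦃x y x' y'⦄, a.R x y → a.R x' y' → x < x' → y < y') ∧
  (∀ ⦃x y⦄, a.R x y → x % 2 = y % 2) ∧
  (∀ ⦃x y x' y'⦄, a.R x y → a.R x' y' → FenceLt x x' → FenceLt y y') ∧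
  (∀ ⦃x y x' y'⦄, a.R x y → a.R x' y' → FenceLt y y' → FenceLt x x')

/-- A partial identity: every point of the domain is fixed. -/
def IsPartialId {n : ℕ} (a : PInj n) : Prop := ∀ ⦃x y⦄, a.R x y → y = x

/-- The partial identity `v_i` with domain `{1,...,n} \ {i}`. -/
def vMap (n i : ℕ) : PInj n where
  R := fun x y => x ∈ Set.Icc 1 n ∧ x ≠ i ∧ y = x
  memL := by rintro x y ⟨h, _, rfl⟩; exact h
  memR := by rintro x y ⟨h, _, rfl⟩; exact h
  func := by rintro x y y' ⟨_, _, rfl⟩ ⟨_, _, rfl⟩; rfl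
  inj := by rintro x x' y ⟨_, _, rfl⟩ ⟨_, _, h⟩; exact h

/-- The map `u_i` with domain `{1,...,i} ∪ {i+4,...,n}`, sending `ρ ↦ ρ+2` for
`ρ ≤ i` and `ρ ↦ ρ` for `ρ ≥ i+4`. -/
def uMap (n i : ℕ) : PInj n where
  R := fun x y => x ∈ Set.Icc 1 n ∧ y ∈ Set.Icc 1 n ∧
        ((x ≤ i ∧ y = x + 2) ∨ (i + 4 ≤ x ∧ y = x))
  memL := by rintro x y ⟨h, _, _⟩; exact h
  memR := by rintro x y ⟨_, h, _⟩; exact h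
  func := by
    rintro x y y' ⟨_, _, (⟨hx, rfl⟩ | ⟨hx, rfl⟩)⟩ ⟨_, _, (⟨hx', rfl⟩ | ⟨hx', rfl⟩)⟩ <;> omega
  inj := by
    rintro x x' y ⟨_, _, (⟨hx, rfl⟩ | ⟨hx, rfl⟩)⟩ ⟨_, _, (⟨hx', h'⟩ | ⟨hx', h'⟩)⟩ <;> omega

/-- The set `J_i = {1,...,i} ∪ {i+4,...,n}`. -/
def Jset (n i : ℕ) : Set ℕ := {x | (1 ≤ x ∧ x ≤ i) ∨ (i + 4 ≤ x ∧ x ≤ n)}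

/-- `G` is a generating set of the monoid `IOF_n^par`: it consists of elements of
`IOF_n^par` and every element of `IOF_n^par` is a finite product of elements of `G`. -/
def Generates (n : ℕ) (G : Set (PInj n)) : Prop :=
  (∀ g ∈ G, IsIOF g) ∧
  ∀ a : PInj n, IsIOF a →
    ∃ l : List (PInj n), (∀ b ∈ l, b ∈ G) ∧ l.prod = a

/-- The conditions of `IsIOF` for the partial injection written in two-row notation `(d i / m i)`. -/
def IsIOFTable {ι : Type*} (d m : ι → ℕ) : Prop :=
  (∀ i j, d i < d j → m i < m j) ∧
  (∀ i, d i % 2 = m i % 2) ∧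
  (∀ i j, FenceLt (d i) (d j) → FenceLt (m i) (m j)) ∧
  (∀ i j, FenceLt (m i) (m j) → FenceLt (d i) (d j))

theorem PInj.R_iff_exists_of_dom {n : ℕ} {ι : Type*} {a : PInj n} {d m : ι → ℕ}
    (hdom : ∀ x, (∃ y, a.R x y) ↔ ∃ i, d i = x) (hm : ∀ i, a.R (d i) (m i)) (x y : ℕ) :
    a.R x y ↔ ∃ i, d i = x ∧ m i = y := by
  constructor
  · intro h
    obtain ⟨i, rfl⟩ := (hdom x).1 ⟨y, h⟩
    exact ⟨i, rfl, a.func (hm i) h⟩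
  · rintro ⟨i, rfl, rfl⟩
    exact hm i

theorem isIOF_iff_isIOFTable {n : ℕ} {ι : Type*} {a : PInj n} {d m : ι → ℕ}
    (hgraph : ∀ x y, a.R x y ↔ ∃ i, d i = x ∧ m i = y) : IsIOF a ↔ IsIOFTable d m := by
  have hR (i : ι) : a.R (d i) (m i) := (hgraph _ _).2 ⟨i, rfl, rfl⟩
  constructor
  · rintro ⟨hord, hpar, hfence, hfence'⟩
    exact ⟨fun i j => hord (hR i) (hR j), fun i => hpar (hR i),
      fun i j => hfence (hR i) (hR j), fun i j => hfence' (hR i) (hR j)⟩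
  · rintro ⟨hord, hpar, hfence, hfence'⟩
    refine ⟨?_, ?_, ?_, ?_⟩ <;> intro x y <;> simp only [hgraph] <;> grind

theorem forall_fenceLt_imp_iff {ι : Type*} {d m : ι → ℕ}
    (hord : ∀ i j, d i < d j → m i < m j) (hpar : ∀ i, d i % 2 = m i % 2) :
    (∀ i j, FenceLt (d i) (d j) → FenceLt (m i) (m j)) ↔
      ∀ i j, d j = d i + 1 → m j = m i + 1 := by
  constructor
  · intro hfence i j hij
    have hlt := hord i j (by omega)
    rcases Nat.even_or_odd (d i) with heven | hodd
    · have hodd' : Odd (d j) := hij ▸ heven.add_one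
      obtain ⟨-, h | h⟩ := hfence j i ⟨hodd', Or.inr hij⟩ <;> omega
    · obtain ⟨-, h | h⟩ := hfence i j ⟨hodd, Or.inl hij⟩ <;> omega
  · rintro hsucc i j ⟨hodd, hij | hji⟩
    · refine ⟨?_, Or.inl (hsucc i j hij)⟩
      rwa [Nat.odd_iff, ← hpar, ← Nat.odd_iff]
    · refine ⟨?_, Or.inr (hsucc j i hji)⟩
      rwa [Nat.odd_iff, ← hpar, ← Nat.odd_iff]

theorem StrictMono.val_add_one_eq_of_apply_eq_add_one {p : ℕ} {f : Fin p → ℕ}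
    (hf : StrictMono f) {i j : Fin p} (h : f j = f i + 1) : (i : ℕ) + 1 = j := by
  have hij : i < j := hf.lt_iff_lt.1 (by omega)
  by_contra hne
  have hi : (i : ℕ) + 1 < p := by omega
  have h₁ : f i < f ⟨i + 1, hi⟩ := hf (Fin.lt_def.2 (by dsimp only; omega))
  have h₂ : f ⟨i + 1, hi⟩ < f j := hf (Fin.lt_def.2 (by dsimp only; omega))
  omega

section Consecutive

variable {p : ℕ} {d m : Fin p → ℕ}

theorem forall_apply_eq_add_one_imp_iff (hd : StrictMono d) :
    (∀ i j, d j = d i + 1 → m j = m i + 1) ↔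
      ∀ k : Fin p, ∀ h : k.val + 1 < p, d ⟨k + 1, h⟩ - d k = 1 → m ⟨k + 1, h⟩ - m k = 1 := by
  constructor
  · intro hsucc k h hk
    have hlt : d k < d ⟨k + 1, h⟩ := hd (Fin.lt_def.2 (by dsimp only; omega))
    have := hsucc k ⟨k + 1, h⟩ (by omega)
    omega
  · rintro hsucc i ⟨j, hj⟩ hij
    obtain rfl : i + 1 = j := hd.val_add_one_eq_of_apply_eq_add_one hij
    have := hsucc i hj (by omega)
    omega

theorem forall_mod_two_eq_iff (hp : 0 < p) (hd : Monotone d) (hm : Monotone m) :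
    (∀ k, d k % 2 = m k % 2) ↔
      d ⟨0, hp⟩ % 2 = m ⟨0, hp⟩ % 2 ∧
        ∀ k : Fin p, ∀ h : k.val + 1 < p,
          (Even (d ⟨k + 1, h⟩ - d k) ↔ Even (m ⟨k + 1, h⟩ - m k)) := by
  have hstep (k : Fin p) (h : k.val + 1 < p) :
      (Even (d ⟨k + 1, h⟩ - d k) ↔ Even (m ⟨k + 1, h⟩ - m k)) ↔
        (d k % 2 = m k % 2 ↔ d ⟨k + 1, h⟩ % 2 = m ⟨k + 1, h⟩ % 2) := by
    have hdk : d k ≤ d ⟨k + 1, h⟩ := hd (Fin.le_def.2 (by dsimp only; omega))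
    have hmk : m k ≤ m ⟨k + 1, h⟩ := hm (Fin.le_def.2 (by dsimp only; omega))
    simp only [Nat.even_iff]
    omega
  simp only [hstep]
  constructor
  · intro hpar
    exact ⟨hpar _, fun k h => ⟨fun _ => hpar _, fun _ => hpar _⟩⟩
  · rintro ⟨h₀, hsucc⟩ ⟨k, hk⟩
    induction k with
    | zero => exact h₀
    | succ k ih => exact (hsucc ⟨k, by omega⟩ hk).1 (ih (by omega))

theorem isIOFTable_iff (hp : 0 < p) (hd : StrictMono d) :
    IsIOFTable d m ↔
      (StrictMono m ∧
       d ⟨0, hp⟩ % 2 = m ⟨0, hp⟩ % 2 ∧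
       (∀ k : Fin p, ∀ h : k.val + 1 < p,
          (d ⟨k.val + 1, h⟩ - d k = 1 ↔ m ⟨k.val + 1, h⟩ - m k = 1)) ∧
       (∀ k : Fin p, ∀ h : k.val + 1 < p,
          (Even (d ⟨k.val + 1, h⟩ - d k) ↔ Even (m ⟨k.val + 1, h⟩ - m k)))) := by
  have hord : (∀ i j, d i < d j → m i < m j) ↔ StrictMono m := by
    simp only [hd.lt_iff_lt, StrictMono]
  have hfence (hm : StrictMono m) (hpar : ∀ k, d k % 2 = m k % 2) :=
    (forall_fenceLt_imp_iff (fun i j h => hm (hd.lt_iff_lt.1 h)) hpar).trans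
      (forall_apply_eq_add_one_imp_iff hd)
  have hfence' (hm : StrictMono m) (hpar : ∀ k, d k % 2 = m k % 2) :=
    (forall_fenceLt_imp_iff (fun i j h => hd (hm.lt_iff_lt.1 h)) fun k => (hpar k).symm).trans
      (forall_apply_eq_add_one_imp_iff hm)
  simp only [IsIOFTable, hord, iff_iff_implies_and_implies (a := d _ - d _ = 1), forall_and]
  constructor
  · rintro ⟨hm, hpar, hfd, hfm⟩
    exact ⟨hm, (forall_mod_two_eq_iff hp hd.monotone hm.monotone).1 hpar |>.1,
      ⟨(hfence hm hpar).1 hfd, (hfence' hm hpar).1 hfm⟩,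
      (forall_mod_two_eq_iff hp hd.monotone hm.monotone).1 hpar |>.2⟩
  · rintro ⟨hm, h₀, ⟨hsd, hsm⟩, heven⟩
    have hpar := (forall_mod_two_eq_iff hp hd.monotone hm.monotone).2 ⟨h₀, heven⟩
    exact ⟨hm, hpar, (hfence hm hpar).2 hsd, (hfence' hm hpar).2 hsm⟩

end Consecutive

/-- characterization of membership in `IOF_n^par` via conditions (i)-(iv). -/
theorem stmt0 (n p : ℕ) (hp : 0 < p) (a : PInj n)
    (d m : Fin p → ℕ) (hd : StrictMono d)
    (hdom : ∀ x, (∃ y, a.R x y) ↔ ∃ k, d k = x)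
    (hm : ∀ k, a.R (d k) (m k)) :
    IsIOF a ↔
      (StrictMono m ∧
       d ⟨0, hp⟩ % 2 = m ⟨0, hp⟩ % 2 ∧
       (∀ k : Fin p, ∀ h : k.val + 1 < p,
          (d ⟨k.val + 1, h⟩ - d k = 1 ↔ m ⟨k.val + 1, h⟩ - m k = 1)) ∧
       (∀ k : Fin p, ∀ h : k.val + 1 < p,
          (Even (d ⟨k.val + 1, h⟩ - d k) ↔ Even (m ⟨k.val + 1, h⟩ - m k)))) :=
  (isIOF_iff_isIOFTable (PInj.R_iff_exists_of_dom hdom hm)).trans (isIOFTable_iff hp hd)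
end

section
/- The monoid IOF_1^par has exactly 2 elements, IOF_2^par has exactly 4 elements, and IOF_3^par has exactly 10 elements. -/
open Finset

namespace PInj

variable {n : ℕ}

open Classical in
noncomputable def graph (a : PInj n) : Finset (ℕ × ℕ) :=
  {p ∈ Icc 1 n ×ˢ Icc 1 n | a.R p.1 p.2}

@[simp]
theorem mem_graph {a : PInj n} {p : ℕ × ℕ} : p ∈ a.graph ↔ a.R p.1 p.2 := by
  classical
  simp only [graph, mem_filter, mem_product, and_iff_right_iff_imp]
  exact fun h => ⟨mem_Icc.mpr (a.memL h), mem_Icc.mpr (a.memR h)⟩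

theorem forall_mem_graph {a : PInj n} {P : ℕ × ℕ → Prop} :
    (∀ p ∈ a.graph, P p) ↔ ∀ ⦃x y⦄, a.R x y → P (x, y) := by
  simp

theorem forall_mem_graph₂ {a : PInj n} {P : ℕ × ℕ → ℕ × ℕ → Prop} :
    (∀ p ∈ a.graph, ∀ q ∈ a.graph, P p q) ↔
      ∀ ⦃x y x' y'⦄, a.R x y → a.R x' y' → P (x, y) (x', y') := by
  simp only [forall_mem_graph]
  exact ⟨fun h _ _ _ _ hp hq => h hp hq, fun h _ _ hp _ _ hq => h hp hq⟩

theorem graph_injective : Function.Injective (graph : PInj n → Finset (ℕ × ℕ)) :=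
  fun a b h => ext fun x y => by simpa using congrArg ((x, y) ∈ ·) h

/-- `p.1 = q.1 ↔ p.2 = q.2` says at once that `s` is functional and injective. -/
def IsGraph (n : ℕ) (s : Finset (ℕ × ℕ)) : Prop :=
  s ⊆ Icc 1 n ×ˢ Icc 1 n ∧ ∀ p ∈ s, ∀ q ∈ s, (p.1 = q.1 ↔ p.2 = q.2)

instance : DecidablePred (IsGraph n) := fun _ => inferInstanceAs (Decidable (_ ∧ _))

def ofGraph (s : Finset (ℕ × ℕ)) (hs : IsGraph n s) : PInj n where
  R x y := (x, y) ∈ s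
  memL _ _ h := mem_Icc.mp (mem_product.mp (hs.1 h)).1
  memR _ _ h := mem_Icc.mp (mem_product.mp (hs.1 h)).2
  func _ _ _ h h' := (hs.2 _ h _ h').mp rfl
  inj _ _ _ h h' := (hs.2 _ h _ h').mpr rfl

theorem isGraph_graph (a : PInj n) : IsGraph n a.graph := by
  refine ⟨fun p hp => ?_, forall_mem_graph₂.mpr fun x y x' y' h h' => ?_⟩
  · have h := mem_graph.mp hp
    exact mem_product.mpr ⟨mem_Icc.mpr (a.memL h), mem_Icc.mpr (a.memR h)⟩
  · exact ⟨fun (hx : x = x') => a.func h (hx ▸ h'), fun (hy : y = y') => a.inj h (hy ▸ h')⟩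

theorem range_graph : Set.range (graph : PInj n → Finset (ℕ × ℕ)) = {s | IsGraph n s} := by
  refine Set.ext fun s => ⟨?_, fun hs => ⟨ofGraph s hs, ?_⟩⟩
  · rintro ⟨a, rfl⟩
    exact isGraph_graph a
  · ext
    simp [ofGraph]

end PInj

instance : DecidableRel FenceLt := fun _ _ => inferInstanceAs (Decidable (Odd _ ∧ _))

def IsIOFGraph (s : Finset (ℕ × ℕ)) : Prop :=
  (∀ p ∈ s, ∀ q ∈ s, p.1 < q.1 → p.2 < q.2) ∧
  (∀ p ∈ s, p.1 % 2 = p.2 % 2) ∧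
  (∀ p ∈ s, ∀ q ∈ s, FenceLt p.1 q.1 → FenceLt p.2 q.2) ∧
  (∀ p ∈ s, ∀ q ∈ s, FenceLt p.2 q.2 → FenceLt p.1 q.1)

instance : DecidablePred IsIOFGraph := fun _ => inferInstanceAs (Decidable (_ ∧ _))

theorem isIOF_iff_isIOFGraph {n : ℕ} {a : PInj n} : IsIOF a ↔ IsIOFGraph a.graph := by
  simp only [IsIOFGraph, PInj.forall_mem_graph₂]
  simp only [PInj.forall_mem_graph]
  rfl

theorem card_isIOF (n : ℕ) : Nat.card {a : PInj n // IsIOF a} =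
    #{s ∈ (Icc 1 n ×ˢ Icc 1 n).powerset | PInj.IsGraph n s ∧ IsIOFGraph s} := by
  have hF : (({s ∈ (Icc 1 n ×ˢ Icc 1 n).powerset | PInj.IsGraph n s ∧ IsIOFGraph s} :
      Finset _) : Set _) =
      Set.range (PInj.graph (n := n)) ∩ {s | IsIOFGraph s} := by
    ext s
    simp only [coe_filter, mem_powerset, PInj.range_graph]
    exact ⟨fun h => h.2, fun h => ⟨h.1.1, h⟩⟩
  rw [← Set.ncard_coe_finset, hF, ← Set.image_preimage_eq_range_inter,
    Set.ncard_image_of_injective _ PInj.graph_injective, ← Nat.card_coe_set_eq]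
  simp only [Set.preimage_ofPred_eq, ← isIOF_iff_isIOFGraph, Set.coe_ofPred]

/-- `|IOF_1^par| = 2`, `|IOF_2^par| = 4`, `|IOF_3^par| = 10`. -/
theorem stmt5 :
    Nat.card {a : PInj 1 // IsIOF a} = 2 ∧
    Nat.card {a : PInj 2 // IsIOF a} = 4 ∧
    Nat.card {a : PInj 3 // IsIOF a} = 10 := by
  refine ⟨?_, ?_, ?_⟩ <;> rw [card_isIOF] <;> decide
end

section
/- Let α ∈ IOF_n^par have domain of size n−1, i.e., domain {1,...,n} \ {i} for some i. Then α is the partial identity on {1,...,n} \ {i}. -/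
/-!
An order-preserving partial injection of `{1,...,n}` defined everywhere except at one point
cannot move a point `x` of its domain by more than one: if `x ↦ y` with `y < x`, the at least
`x - 2` points of the domain below `x` are sent injectively below `y`, into a set of `y - 1`
points, so `x ≤ y + 1`; symmetrically `y ≤ x + 1`. Parity preservation rules out `y = x ± 1`.
-/

namespace PInj

variable {n : ℕ}

theorem card_le_card_of_mapsTo (a : PInj n) {s t : Finset ℕ} (hs : ↑s ⊆ a.dom)
    (hst : ∀ ⦃x y⦄, x ∈ s → a.R x y → y ∈ t) : s.card ≤ t.card :=
  Finset.card_le_card_of_forall_subsingleton a.R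
    (fun _ hx => (hs hx).imp fun _ hy => ⟨hst hx hy, hy⟩)
    (fun _ _ _ hx _ hx' => a.inj hx.2 hx'.2)

section StrictMono

variable {a : PInj n} {i x y : ℕ}
  (hmono : ∀ ⦃x y x' y'⦄, a.R x y → a.R x' y' → x < x' → y < y')
  (hdom : Set.Icc 1 n \ {i} ⊆ a.dom)
include hmono hdom

theorem left_le_right_add_one (h : a.R x y) : x ≤ y + 1 := by
  have hx := (Set.mem_Icc.1 (a.memL h)).2
  have hy := (Set.mem_Icc.1 (a.memR h)).1
  have hcard : ((Finset.Ico 1 x).erase i).card ≤ (Finset.Ico 1 y).card := by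
    refine a.card_le_card_of_mapsTo (fun x' hx' => hdom ?_) fun x' y' hx' h' => ?_
    · simp only [Finset.coe_erase, Finset.coe_Ico, Set.mem_sdiff, Set.mem_Ico,
        Set.mem_singleton_iff] at hx'
      exact ⟨⟨hx'.1.1, by omega⟩, hx'.2⟩
    · rw [Finset.mem_erase, Finset.mem_Ico] at hx'
      exact Finset.mem_Ico.2 ⟨(a.memR h').1, hmono h' h hx'.2.2⟩
  have := Finset.pred_card_le_card_erase.trans hcard
  simp only [Nat.card_Ico] at this
  omega

theorem right_le_left_add_one (h : a.R x y) : y ≤ x + 1 := by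
  have hx := (Set.mem_Icc.1 (a.memL h)).1
  have hy := (Set.mem_Icc.1 (a.memR h)).2
  have hcard : ((Finset.Ioc x n).erase i).card ≤ (Finset.Ioc y n).card := by
    refine a.card_le_card_of_mapsTo (fun x' hx' => hdom ?_) fun x' y' hx' h' => ?_
    · simp only [Finset.coe_erase, Finset.coe_Ioc, Set.mem_sdiff, Set.mem_Ioc,
        Set.mem_singleton_iff] at hx'
      exact ⟨⟨by omega, hx'.1.2⟩, hx'.2⟩
    · rw [Finset.mem_erase, Finset.mem_Ioc] at hx'
      exact Finset.mem_Ioc.2 ⟨hmono h h' hx'.2.1, (a.memR h').2⟩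
  have := Finset.pred_card_le_card_erase.trans hcard
  simp only [Nat.card_Ioc] at this
  omega

end StrictMono

theorem eq_vMap_of_isPartialId {a : PInj n} {i : ℕ} (ha : IsPartialId a)
    (hdom : a.dom = Set.Icc 1 n \ {i}) : a = vMap n i := by
  ext x y
  constructor
  · intro h
    have hx : x ∈ a.dom := ⟨y, h⟩
    rw [hdom] at hx
    exact ⟨hx.1, hx.2, ha h⟩
  · rintro ⟨hx, hxi, rfl⟩
    obtain ⟨y', h⟩ := hdom.symm.subset ⟨hx, hxi⟩
    rwa [ha h] at h

end PInj

theorem IsIOF.isPartialId {n i : ℕ} {a : PInj n} (ha : IsIOF a)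
    (hdom : Set.Icc 1 n \ {i} ⊆ a.dom) : IsPartialId a := by
  intro x y h
  have := ha.2.1 h
  have := PInj.left_le_right_add_one ha.1 hdom h
  have := PInj.right_le_left_add_one ha.1 hdom h
  omega

theorem stmt7_general (n i : ℕ) (a : PInj n)
    (ha : IsIOF a) (hdom : PInj.dom a = Set.Icc 1 n \ {i}) :
    a = vMap n i :=
  PInj.eq_vMap_of_isPartialId (ha.isPartialId hdom.symm.subset) hdom

/-- an element of `IOF_n^par` with domain `{1,...,n} \ {i}` is the
partial identity `v_i`. -/
theorem stmt7 (n i : ℕ) (hn : 4 ≤ n) (hi : i ∈ Set.Icc 1 n) (a : PInj n)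
    (ha : IsIOF a) (hdom : PInj.dom a = Set.Icc 1 n \ {i}) :
    a = vMap n i :=
  stmt7_general n i a ha hdom
end

section
/- Let α ∈ IOF_n^par have rank n−2 (i.e., its domain has exactly n−2 elements). Then either α is the partial identity on its domain, or α = u_{n−2} (the map with domain {1,...,n−2} sending ρ ↦ ρ+2), or α = x_{n−2} (the map with domain {3,...,n} sending ρ ↦ ρ−2). -/
/-! Write `a x = x + s x`. The fence conditions make `a` send consecutive points to consecutive
points and forbid adjacent images of non-adjacent points, so `s` is constant along runs of the
domain and, together with parity, cannot decrease across a gap of one or two missing points.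
Only two points of `{1,…,n}` are missing, so `s` is nondecreasing and even, with
`1 - min dom ≤ s ≤ n - max dom`. Unless the missing points are `{1,2}` or `{n-1,n}` this forces
`s = 0`; in those two cases the domain is an interval, `s` is constant, and it is `0` or `±2`. -/

open Set

theorem exists_lt_forall_mem_iff_of_ncard {S : Set ℕ} {n : ℕ} (hS : S ⊆ Icc 1 n)
    (hcard : S.ncard + 2 = n) : ∃ p q, p < q ∧ ∀ x, x ∈ S ↔ x ∈ Icc 1 n ∧ x ≠ p ∧ x ≠ q := by
  have hdiff : (Icc 1 n \ S).ncard = 2 := by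
    rw [ncard_sdiff' hS, ncard_Icc_nat]
    omega
  obtain ⟨p, q, hpq, hpair⟩ := ncard_eq_two.mp hdiff
  have hmem : ∀ x, x ∈ S ↔ x ∈ Icc 1 n ∧ x ≠ p ∧ x ≠ q := fun x => by
    have hx := Set.ext_iff.mp hpair x
    simp only [mem_sdiff, mem_insert_iff, mem_singleton_iff] at hx
    have := @hS x
    tauto
  rcases hpq.lt_or_gt with hlt | hlt
  · exact ⟨p, q, hlt, hmem⟩
  · exact ⟨q, p, hlt, fun x => (hmem x).trans (and_congr_right' and_comm)⟩

section

variable {n : ℕ} {a : PInj n}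

theorem IsIOF.inv (ha : IsIOF a) : IsIOF a.inv := by
  obtain ⟨hmono, hpar, hfence, hfence'⟩ := ha
  refine ⟨fun x y x' y' h h' hlt => ?_, fun x y h => (hpar h).symm,
    fun _ _ _ _ h h' hf => hfence' h h' hf, fun _ _ _ _ h h' hf => hfence h h' hf⟩
  rcases lt_trichotomy y y' with hy | rfl | hy
  · exact hy
  · exact absurd (a.func h h') hlt.ne
  · exact absurd (hmono h' h hy) (not_lt.2 hlt.le)

theorem IsIOF.R_succ_eq (ha : IsIOF a) {d y y' : ℕ} (h : a.R d y) (h' : a.R (d + 1) y') :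
    y' = y + 1 := by
  have hlt : y < y' := ha.1 h h' (Nat.lt_succ_self d)
  rcases Nat.even_or_odd d with hd | hd
  · have := (ha.2.2.1 h' h ⟨hd.add_one, Or.inr rfl⟩).2
    omega
  · have := (ha.2.2.1 h h' ⟨hd, Or.inl rfl⟩).2
    omega

theorem IsIOF.eq_succ_of_R_succ (ha : IsIOF a) {d d' y : ℕ} (h : a.R d y) (h' : a.R d' (y + 1)) :
    d' = d + 1 :=
  ha.inv.R_succ_eq (a := a.inv) h h'

theorem IsIOF.R_add (ha : IsIOF a) {x y m : ℕ} (h : a.R x y) (hdom : ∀ k ≤ m, x + k ∈ a.dom) :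
    a.R (x + m) (y + m) := by
  induction m with
  | zero => exact h
  | succ m ih =>
    obtain ⟨z, hz⟩ := hdom (m + 1) le_rfl
    have hm := ih fun k hk => hdom k (by omega)
    rw [← add_assoc] at hz
    rwa [← add_assoc, ← add_assoc, ← ha.R_succ_eq hm hz]

theorem IsIOF.R_iff_of_dom_eq_Icc (ha : IsIOF a) {l r c : ℕ} (hdom : a.dom = Icc l r)
    (hc : a.R l c) (x y : ℕ) : a.R x y ↔ l ≤ x ∧ x ≤ r ∧ y + l = x + c := by
  have hrun : ∀ m, l + m ≤ r → a.R (l + m) (c + m) := fun m hm =>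
    ha.R_add hc fun k hk => hdom ▸ ⟨by omega, by omega⟩
  constructor
  · intro h
    obtain ⟨hlx, hxr⟩ : x ∈ Icc l r := hdom ▸ ⟨y, h⟩
    have := a.func h (Nat.add_sub_cancel' hlx ▸ hrun (x - l) (by omega))
    omega
  · rintro ⟨hlx, hxr, hy⟩
    have := hrun (x - l) (by omega)
    rwa [Nat.add_sub_cancel' hlx, show c + (x - l) = y by omega] at this

/- `y + x' ≤ y' + x` says that the shift `y - x` does not decrease from `x` to `x'`. Across a gap
the images cannot be adjacent (fence condition on the inverse), and across a gap of two
points they differ by an odd amount (parity). -/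
theorem IsIOF.shift_mono_of_le_add_three (ha : IsIOF a) {x y x' y' : ℕ} (h : a.R x y)
    (h' : a.R x' y') (hle : x ≤ x') (hle3 : x' ≤ x + 3) : y + x' ≤ y' + x := by
  rcases hle.eq_or_lt with rfl | hlt
  · rw [a.func h h']
  have hy : y < y' := ha.1 h h' hlt
  have hpar := ha.2.1 h
  have hpar' := ha.2.1 h'
  rcases (by omega : x' = x + 1 ∨ x + 2 ≤ x') with rfl | hx2
  · have := ha.R_succ_eq h h'
    omega
  · have : y' ≠ y + 1 := fun he => by
      have := ha.eq_succ_of_R_succ h (he ▸ h')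
      omega
    omega

theorem IsIOF.shift_mono (ha : IsIOF a)
    (hgap : ∀ k, 1 ≤ k → k + 2 ≤ n → ∃ j ∈ a.dom, k ≤ j ∧ j ≤ k + 2)
    {x y x' y' : ℕ} (h : a.R x y) (h' : a.R x' y') (hle : x ≤ x') : y + x' ≤ y' + x := by
  by_cases hle3 : x' ≤ x + 3
  · exact ha.shift_mono_of_le_add_three h h' hle hle3
  obtain ⟨j, ⟨z, hz⟩, hj, hj'⟩ := hgap (x + 1) (by omega) (by have := (a.memL h').2; omega)
  have h1 := ha.shift_mono_of_le_add_three h hz (by omega) (by omega)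
  have h2 := ha.shift_mono hgap hz h' (by omega)
  omega
termination_by x' - x

theorem IsIOF.isPartialId_of_near_ends (ha : IsIOF a)
    (hgap : ∀ k, 1 ≤ k → k + 2 ≤ n → ∃ j ∈ a.dom, k ≤ j ∧ j ≤ k + 2)
    (hlo : ∃ j ∈ a.dom, j ≤ 2) (hhi : ∃ j ∈ a.dom, n - 1 ≤ j) : IsPartialId a := by
  intro x y h
  obtain ⟨xl, ⟨yl, hl⟩, hxl⟩ := hlo
  obtain ⟨xr, ⟨yr, hr⟩, hxr⟩ := hhi
  have hpar := ha.2.1 h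
  obtain ⟨hy1, hyn⟩ := a.memR h
  have hlow : x ≤ y + 1 := by
    rcases le_total xl x with hle | hle
    · have := (a.memR hl).1
      have := ha.shift_mono hgap hl h hle
      omega
    · omega
  have hhigh : y ≤ x + 1 := by
    rcases le_total x xr with hle | hle
    · have := (a.memR hr).2
      have := ha.shift_mono hgap h hr hle
      omega
    · omega
  omega

theorem IsIOF.isPartialId_of_mem_dom_iff (ha : IsIOF a) (hn : 2 ≤ n) {p q : ℕ} (hpq : p < q)
    (hdom : ∀ x, x ∈ a.dom ↔ x ∈ Icc 1 n ∧ x ≠ p ∧ x ≠ q)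
    (hlo : ¬(p = 1 ∧ q = 2)) (hhi : ¬(p = n - 1 ∧ q = n)) : IsPartialId a := by
  have hmem : ∀ j, 1 ≤ j → j ≤ n → j ≠ p ∧ j ≠ q → j ∈ a.dom := fun j h1 h2 h =>
    (hdom j).2 ⟨⟨h1, h2⟩, h⟩
  refine ha.isPartialId_of_near_ends (fun k hk hkn => ?_) ?_ ?_
  · rcases (by omega : (k ≠ p ∧ k ≠ q) ∨ (k + 1 ≠ p ∧ k + 1 ≠ q) ∨ (k + 2 ≠ p ∧ k + 2 ≠ q))
      with h | h | h
    · exact ⟨_, hmem _ hk (by omega) h, le_rfl, by omega⟩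
    · exact ⟨_, hmem _ (by omega) (by omega) h, by omega, by omega⟩
    · exact ⟨_, hmem _ (by omega) hkn h, by omega, le_rfl⟩
  · rcases (by omega : (1 ≠ p ∧ 1 ≠ q) ∨ (2 ≠ p ∧ 2 ≠ q)) with h | h
    · exact ⟨1, hmem 1 le_rfl (by omega) h, by omega⟩
    · exact ⟨2, hmem 2 (by omega) (by omega) h, le_rfl⟩
  · rcases (by omega : (n ≠ p ∧ n ≠ q) ∨ (n - 1 ≠ p ∧ n - 1 ≠ q)) with h | h
    · exact ⟨n, hmem n (by omega) le_rfl h, by omega⟩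
    · exact ⟨n - 1, hmem (n - 1) (by omega) (by omega) h, le_rfl⟩

theorem IsIOF.isPartialId_or_eq_uMap (ha : IsIOF a) (hn : 3 ≤ n) (hdom : a.dom = Icc 1 (n - 2)) :
    IsPartialId a ∨ a = uMap n (n - 2) := by
  obtain ⟨c, hc⟩ : 1 ∈ a.dom := hdom ▸ ⟨le_rfl, by omega⟩
  have hR := ha.R_iff_of_dom_eq_Icc hdom hc
  have := (a.memR ((hR _ _).2 ⟨by omega, le_rfl, by omega⟩ : a.R (n - 2) (n - 3 + c))).2
  have := ha.2.1 hc
  rcases (by omega : c = 1 ∨ c = 3) with rfl | rfl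
  · exact Or.inl fun x y h => by have := (hR x y).1 h; omega
  · exact Or.inr <| PInj.ext fun x y => by rw [hR]; simp only [uMap, mem_Icc]; omega

theorem IsIOF.isPartialId_or_eq_uMap_inv (ha : IsIOF a) (hn : 3 ≤ n) (hdom : a.dom = Icc 3 n) :
    IsPartialId a ∨ a = (uMap n (n - 2)).inv := by
  obtain ⟨c, hc⟩ : 3 ∈ a.dom := hdom ▸ ⟨le_rfl, hn⟩
  have hR := ha.R_iff_of_dom_eq_Icc hdom hc
  have := (a.memR ((hR _ _).2 ⟨hn, le_rfl, by omega⟩ : a.R n (n - 3 + c))).2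
  have := (a.memR hc).1
  have := ha.2.1 hc
  rcases (by omega : c = 1 ∨ c = 3) with rfl | rfl
  · exact Or.inr <| PInj.ext fun x y => by
      rw [hR]; simp only [PInj.inv, uMap, mem_Icc]; omega
  · exact Or.inl fun x y h => by have := (hR x y).1 h; omega

end

/-- an element of `IOF_n^par` of rank `n-2` is a partial identity, or
`u_{n-2}`, or `x_{n-2} = u_{n-2}⁻¹`. -/
theorem stmt8 (n : ℕ) (hn : 4 ≤ n) (a : PInj n) (ha : IsIOF a)
    (hrk : (PInj.dom a).ncard = n - 2) :
    IsPartialId a ∨ a = uMap n (n - 2) ∨ a = (uMap n (n - 2)).inv := by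
  obtain ⟨p, q, hpq, hdom⟩ := exists_lt_forall_mem_iff_of_ncard
    (fun _ ⟨_, h⟩ => a.memL h : a.dom ⊆ Icc 1 n) (by omega : a.dom.ncard + 2 = n)
  by_cases hhi : p = n - 1 ∧ q = n
  · have hI : a.dom = Icc 1 (n - 2) := Set.ext fun x => by
      rw [hdom]; simp only [mem_Icc]; omega
    exact (ha.isPartialId_or_eq_uMap (by omega) hI).imp_right Or.inl
  by_cases hlo : p = 1 ∧ q = 2
  · have hI : a.dom = Icc 3 n := Set.ext fun x => by
      rw [hdom]; simp only [mem_Icc]; omega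
    exact (ha.isPartialId_or_eq_uMap_inv (by omega) hI).imp_right Or.inr
  exact Or.inl (ha.isPartialId_of_mem_dom_iff (by omega) hpq hdom hlo hhi)
end

section
/- Every generating set G of the monoid IOF_n^par (n ≥ 4) contains all n partial identities v_i with domain {1,...,n} \ {i}, i ∈ {1,...,n}. -/
/-!
An order-preserving partial injection of `{1,...,n}` whose domain misses at most the point `i`
moves each point by at most one: below `x` there are at least `x - 2` points of the domain, and
above it at least `n - x - 1`.  If it also preserves parity it is therefore a partial identity,
i.e. `1` or `v_i`.  So if `g * h = v_i` with `g ∈ IOF_n^par`, the domain of `g` contains that of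
`v_i`, whence `g = v_i`, or `g = 1` and `h = v_i`; by induction, `v_i` is one of the factors of
any factorisation of `v_i` in `IOF_n^par`.
-/

open Set

namespace PInj

variable {n i : ℕ}

def OrderPreserving (a : PInj n) : Prop :=
  ∀ ⦃x y x' y'⦄, a.R x y → a.R x' y' → x < x' → y < y'

def ParityPreserving (a : PInj n) : Prop := ∀ ⦃x y⦄, a.R x y → x % 2 = y % 2

theorem OrderPreserving.lower_bound {a : PInj n} (ha : a.OrderPreserving)
    (hdom : Icc 1 n \ {i} ⊆ a.dom) {x y : ℕ} (hxy : a.R x y) :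
    (x ≤ i → x ≤ y) ∧ (i < x → x ≤ y + 1) := by
  obtain ⟨hx1, hxn⟩ := a.memL hxy
  obtain ⟨hy1, -⟩ := a.memR hxy
  by_cases hx : x = 1
  · omega
  by_cases hpred : x - 1 = i
  · by_cases hx2 : x = 2
    · omega
    obtain ⟨y₂, h₂⟩ := hdom (show x - 2 ∈ Icc 1 n \ {i} from
      ⟨⟨by omega, by omega⟩, by simp only [mem_singleton_iff]; omega⟩)
    have := ha h₂ hxy (by omega)
    have := (ha.lower_bound hdom h₂).1 (by omega)
    omega
  · obtain ⟨y₁, h₁⟩ := hdom (show x - 1 ∈ Icc 1 n \ {i} from ⟨⟨by omega, by omega⟩, hpred⟩)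
    have := ha h₁ hxy (by omega)
    have := ha.lower_bound hdom h₁
    omega
termination_by x

theorem OrderPreserving.upper_bound {a : PInj n} (ha : a.OrderPreserving)
    (hdom : Icc 1 n \ {i} ⊆ a.dom) {x y : ℕ} (hxy : a.R x y) :
    (i ≤ x → y ≤ x) ∧ (x < i → y ≤ x + 1) := by
  obtain ⟨hx1, hxn⟩ := a.memL hxy
  obtain ⟨-, hyn⟩ := a.memR hxy
  by_cases hx : x = n
  · omega
  by_cases hsucc : x + 1 = i
  · by_cases hx2 : x + 1 = n
    · omega
    obtain ⟨y₂, h₂⟩ := hdom (show x + 2 ∈ Icc 1 n \ {i} from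
      ⟨⟨by omega, by omega⟩, by simp only [mem_singleton_iff]; omega⟩)
    have := ha hxy h₂ (by omega)
    have := (ha.upper_bound hdom h₂).1 (by omega)
    omega
  · obtain ⟨y₁, h₁⟩ := hdom (show x + 1 ∈ Icc 1 n \ {i} from ⟨⟨by omega, by omega⟩, hsucc⟩)
    have := ha hxy h₁ (by omega)
    have := ha.upper_bound hdom h₁
    omega
termination_by n - x

theorem OrderPreserving.isPartialId {a : PInj n} (ha : a.OrderPreserving)
    (hdom : Icc 1 n \ {i} ⊆ a.dom) (hpar : a.ParityPreserving) : IsPartialId a := by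
  intro x y hxy
  have := ha.lower_bound hdom hxy
  have := ha.upper_bound hdom hxy
  have := hpar hxy
  omega

theorem dom_subset_Icc (a : PInj n) : a.dom ⊆ Icc 1 n := fun _ ⟨_, h⟩ => a.memL h

theorem isPartialId_one : IsPartialId (1 : PInj n) := fun _ _ h => h.2

theorem dom_one : (1 : PInj n).dom = Icc 1 n :=
  subset_antisymm (dom_subset_Icc 1) fun x hx => ⟨x, hx, rfl⟩

end PInj

open PInj

section

variable {n i : ℕ}

theorem IsIOF.orderPreserving {a : PInj n} (ha : IsIOF a) : a.OrderPreserving := ha.1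

theorem IsIOF.parityPreserving {a : PInj n} (ha : IsIOF a) : a.ParityPreserving := ha.2.1

theorem IsPartialId.R_iff {a : PInj n} (ha : IsPartialId a) {x y : ℕ} :
    a.R x y ↔ x ∈ a.dom ∧ y = x :=
  ⟨fun h => ⟨⟨y, h⟩, ha h⟩, by rintro ⟨⟨z, hz⟩, rfl⟩; obtain rfl := ha hz; exact hz⟩

theorem IsPartialId.ext_of_dom_eq {a b : PInj n} (ha : IsPartialId a) (hb : IsPartialId b)
    (h : a.dom = b.dom) : a = b := by
  ext x y
  rw [ha.R_iff, hb.R_iff, h]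

theorem isPartialId_vMap : IsPartialId (vMap n i) := fun _ _ h => h.2.2

theorem dom_vMap : (vMap n i).dom = Icc 1 n \ {i} :=
  subset_antisymm (fun _ ⟨_, hx, hxi, _⟩ => ⟨hx, hxi⟩) fun x hx => ⟨x, hx.1, hx.2, rfl⟩

theorem isIOF_vMap : IsIOF (vMap n i) := by
  refine ⟨?_, ?_, ?_, ?_⟩
  · rintro x y x' y' ⟨_, _, rfl⟩ ⟨_, _, rfl⟩ h; exact h
  · rintro x y ⟨_, _, rfl⟩; rfl
  · rintro x y x' y' ⟨_, _, rfl⟩ ⟨_, _, rfl⟩ h; exact h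
  · rintro x y x' y' ⟨_, _, rfl⟩ ⟨_, _, rfl⟩ h; exact h

theorem eq_vMap_or_eq_vMap_of_mul_eq {g h : PInj n} (hg : g.OrderPreserving)
    (hg' : g.ParityPreserving) (hgh : g * h = vMap n i) : g = vMap n i ∨ h = vMap n i := by
  have hgdom : Icc 1 n \ {i} ⊆ g.dom := fun x hx => by
    have hxx : (vMap n i).R x x := ⟨hx.1, hx.2, rfl⟩
    rw [← hgh] at hxx
    obtain ⟨y, hxy, -⟩ := hxx
    exact ⟨y, hxy⟩
  have hgid := hg.isPartialId hgdom hg'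
  by_cases hi : i ∈ g.dom
  · right
    have hg1 : g = 1 := hgid.ext_of_dom_eq isPartialId_one <| by
      rw [dom_one]
      refine subset_antisymm (dom_subset_Icc g) ?_
      rw [← insert_eq_of_mem hi]
      exact sdiff_singleton_subset_iff.mp hgdom
    rwa [hg1, one_mul] at hgh
  · left
    exact hgid.ext_of_dom_eq isPartialId_vMap <| by
      rw [dom_vMap]
      exact subset_antisymm (subset_sdiff_singleton (dom_subset_Icc g) hi) hgdom

theorem vMap_mem_of_prod_eq {l : List (PInj n)}
    (hl : ∀ b ∈ l, b.OrderPreserving ∧ b.ParityPreserving) (hi : i ∈ Icc 1 n)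
    (hprod : l.prod = vMap n i) : vMap n i ∈ l := by
  induction l with
  | nil =>
    have hii : (vMap n i).R i i := by rw [← hprod]; exact ⟨hi, rfl⟩
    exact absurd rfl hii.2.1
  | cons g t ih =>
    rw [List.prod_cons] at hprod
    obtain ⟨hg, hg'⟩ := hl g List.mem_cons_self
    rcases eq_vMap_or_eq_vMap_of_mul_eq hg hg' hprod with rfl | htprod
    · exact List.mem_cons_self
    · exact List.mem_cons_of_mem g (ih (fun b hb => hl b (List.mem_cons_of_mem g hb)) htprod)

end

theorem stmt10_general (n : ℕ) (G : Set (PInj n)) (hG : Generates n G) :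
    ∀ i ∈ Set.Icc 1 n, vMap n i ∈ G := by
  intro i hi
  obtain ⟨l, hlG, hprod⟩ := hG.2 (vMap n i) isIOF_vMap
  have hl : ∀ b ∈ l, b.OrderPreserving ∧ b.ParityPreserving := fun b hb =>
    have hb := hG.1 b (hlG b hb)
    ⟨hb.orderPreserving, hb.parityPreserving⟩
  exact hlG _ (vMap_mem_of_prod_eq hl hi hprod)

/-- every generating set of `IOF_n^par` contains all the partial
identities `v_1, ..., v_n`. -/
theorem stmt10 (n : ℕ) (hn : 4 ≤ n) (G : Set (PInj n)) (hG : Generates n G) :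
    ∀ i ∈ Set.Icc 1 n, vMap n i ∈ G :=
  stmt10_general n G hG
end
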